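/- (Distributed noisy aggregation.) Let n ≥ 1, λ > 0, and let l₁, …, l_n ∈ ℝ be fixed values. For i = 1, …, n let G₁ᵢ and G₂ᵢ be 2n mutually independent random variables, each distributed according to the Gamma distribution with shape 1/n and scale λ, and set the perturbed value l̂ᵢ = lᵢ + G₁ᵢ − G₂ᵢ. Then the aggregate L̂ = ∑_{i=1}^n l̂ᵢ is distributed according to the Laplace distribution with scale λ shifted by L = ∑_{i=1}^n lᵢ, i.e., the law of L̂ has density x ↦ (1/(2λ))·exp(−|x − L|/λ) with respect to Lebesgue measure. -/

import Mathlib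

/-!
Gamma laws with a common rate form a convolution semigroup in the shape parameter: the
convolution of two Gamma densities is a Beta integral. Hence each of the two sums of `n`
independent `Γ(1/n)` noises is exponential with mean `λ`. These sums are independent, and the
difference of two independent exponentials of rate `r` has density
`∫_{y ≥ max x 0} r e^{-r y} · r e^{-r (y - x)} dy = (r / 2) e^{-r |x|}`; translating by `L`
gives the claim.
-/

open MeasureTheory ProbabilityTheory Real Set
open scoped BigOperators ENNReal

theorem integral_rpow_mul_sub_rpow_eq_mul_beta {a b x : ℝ} (ha : 0 < a) (hb : 0 < b)
    (hx : 0 < x) :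
    ∫ t in 0..x, t ^ (a - 1) * (x - t) ^ (b - 1) = x ^ (a + b - 1) * beta a b := by
  have hcast : ∫ t in 0..x, (t : ℂ) ^ ((a : ℂ) - 1) * ((x : ℂ) - t) ^ ((b : ℂ) - 1) =
      ((∫ t in 0..x, t ^ (a - 1) * (x - t) ^ (b - 1) : ℝ) : ℂ) := by
    rw [← intervalIntegral.integral_ofReal]
    refine intervalIntegral.integral_congr fun t ht => ?_
    rw [uIcc_of_le hx.le] at ht
    simp only [Complex.ofReal_mul, Complex.ofReal_cpow ht.1, Complex.ofReal_sub,
      Complex.ofReal_cpow (sub_nonneg.2 ht.2), Complex.ofReal_one]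
  have h := congrArg Complex.re (Complex.betaIntegral_scaled a b hx)
  rwa [hcast, Complex.ofReal_re, show (a : ℂ) + b - 1 = ((a + b - 1 : ℝ) : ℂ) by push_cast; rfl,
    ← Complex.ofReal_cpow hx.le, Complex.re_ofReal_mul, ← beta_eq_betaIntegralReal a b ha hb] at h

theorem lintegral_Ioi_exp_mul {a : ℝ} (ha : a < 0) (c : ℝ) :
    ∫⁻ y in Ioi c, ENNReal.ofReal (exp (a * y)) = ENNReal.ofReal (-exp (a * c) / a) := by
  rw [← ofReal_integral_eq_lintegral_ofReal (integrableOn_exp_mul_Ioi ha c)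
    (ae_of_all _ fun _ => (exp_pos _).le), integral_exp_mul_Ioi ha c]

theorem MeasureTheory.MeasurePreserving.map_withDensity {α β : Type*} [MeasurableSpace α]
    [MeasurableSpace β] {μ : Measure α} {ν : Measure β} {e : α ≃ᵐ β} (he : MeasurePreserving e μ ν)
    (f : α → ℝ≥0∞) : (μ.withDensity f).map e = ν.withDensity (f ∘ e.symm) := by
  ext s hs
  rw [Measure.map_apply e.measurable hs, withDensity_apply _ (hs.preimage e.measurable),
    withDensity_apply _ hs, ← he.setLIntegral_comp_preimage_emb e.measurableEmbedding]
  simp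

namespace ProbabilityTheory

theorem gammaPDF_lconvolution_gammaPDF {a b r x : ℝ} (ha : 0 < a) (hb : 0 < b) (hr : 0 < r)
    (hx : x ≠ 0) : (gammaPDF a r ⋆ₗ gammaPDF b r) x = gammaPDF (a + b) r x := by
  have hΓa := Gamma_pos_of_pos ha
  have hΓb := Gamma_pos_of_pos hb
  set K := r ^ a / Gamma a * (r ^ b / Gamma b) * exp (-(r * x)) with hK
  have hprod : ∀ t, gammaPDF a r t * gammaPDF b r (-t + x) = (Icc 0 x).indicator
      (fun t => ENNReal.ofReal (K * (t ^ (a - 1) * (x - t) ^ (b - 1)))) t := by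
    intro t
    by_cases ht : t ∈ Icc 0 x
    · have := rpow_nonneg ht.1 (a - 1)
      rw [indicator_of_mem ht, gammaPDF_of_nonneg ht.1, gammaPDF_of_nonneg (by linarith [ht.2]),
        ← ENNReal.ofReal_mul (by positivity), neg_add_eq_sub, hK,
        show -(r * x) = -(r * t) + -(r * (x - t)) by ring, exp_add]
      ring_nf
    · rw [indicator_of_notMem ht]
      rcases not_and_or.1 ht with ht | ht
      · rw [gammaPDF_of_neg (not_le.1 ht), zero_mul]
      · rw [gammaPDF_of_neg (a := b) (by linarith [not_le.1 ht]), mul_zero]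
  rw [lconvolution_def, lintegral_congr hprod, lintegral_indicator measurableSet_Icc]
  rcases hx.lt_or_gt with hneg | hpos
  · rw [Icc_eq_empty (not_le.2 hneg), Measure.restrict_empty, lintegral_zero_measure,
      gammaPDF_of_neg hneg]
  have hbeta := integral_rpow_mul_sub_rpow_eq_mul_beta ha hb hpos
  have hint : IntegrableOn (fun t => t ^ (a - 1) * (x - t) ^ (b - 1)) (Icc 0 x) := by
    rw [integrableOn_Icc_iff_integrableOn_Ioc,
      ← intervalIntegrable_iff_integrableOn_Ioc_of_le hpos.le]
    exact intervalIntegral.intervalIntegrable_of_integral_ne_zero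
      (by rw [hbeta]; have := beta_pos ha hb; positivity)
  have hnonneg : 0 ≤ᵐ[volume.restrict (Icc 0 x)] fun t => K * (t ^ (a - 1) * (x - t) ^ (b - 1)) :=
    ae_restrict_of_forall_mem measurableSet_Icc fun t ht => by
      have := rpow_nonneg ht.1 (a - 1)
      have := rpow_nonneg (sub_nonneg.2 ht.2) (b - 1)
      positivity
  rw [← ofReal_integral_eq_lintegral_ofReal (hint.const_mul K) hnonneg, integral_const_mul,
    integral_Icc_eq_integral_Ioc, ← intervalIntegral.integral_of_le hpos.le, hbeta,
    gammaPDF_of_nonneg hpos.le, beta, rpow_add hr, hK]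
  have := Gamma_pos_of_pos (add_pos ha hb)
  field_simp

theorem gammaMeasure_conv_gammaMeasure {a b r : ℝ} (ha : 0 < a) (hb : 0 < b) (hr : 0 < r) :
    gammaMeasure a r ∗ gammaMeasure b r = gammaMeasure (a + b) r := by
  rw [gammaMeasure, gammaMeasure, gammaMeasure, conv_withDensity_eq_lconvolution
    (by unfold gammaPDF; fun_prop) (by unfold gammaPDF; fun_prop)]
  refine withDensity_congr_ae ?_
  filter_upwards [Measure.ae_ne volume 0] with x hx
  exact gammaPDF_lconvolution_gammaPDF ha hb hr hx

/-- Parametrised, like `gammaPDF`, by the rate `r`, the reciprocal of the scale. -/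
noncomputable def laplacePDF (r x : ℝ) : ℝ≥0∞ := ENNReal.ofReal (r / 2 * exp (-(r * |x|)))

noncomputable def laplaceMeasure (r : ℝ) : Measure ℝ := volume.withDensity (laplacePDF r)

theorem exponentialPDF_lconvolution_exponentialPDF_neg {r : ℝ} (hr : 0 < r) (x : ℝ) :
    (exponentialPDF r ⋆ₗ fun y => exponentialPDF r (-y)) x = laplacePDF r x := by
  set M := max x 0 with hM
  have hprod : ∀ y, exponentialPDF r y * exponentialPDF r (-(-y + x)) = (Ici M).indicator
      (fun y => ENNReal.ofReal (r ^ 2 * exp (r * x)) * ENNReal.ofReal (exp (-(2 * r) * y))) y := by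
    intro y
    by_cases hy : y ∈ Ici M
    · have hy0 : 0 ≤ y := (le_max_right x 0).trans (mem_Ici.1 hy)
      have hyx : 0 ≤ -(-y + x) := by linarith [(le_max_left x 0).trans (mem_Ici.1 hy)]
      rw [indicator_of_mem hy, exponentialPDF_of_nonneg hy0, exponentialPDF_of_nonneg hyx,
        ← ENNReal.ofReal_mul (by positivity), ← ENNReal.ofReal_mul (by positivity)]
      have hexp : exp (-(r * y)) * exp (-(r * -(-y + x))) = exp (r * x) * exp (-(2 * r) * y) := by
        rw [← exp_add, ← exp_add]
        ring_nf
      congr 1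
      linear_combination r ^ 2 * hexp
    · rw [indicator_of_notMem hy]
      rw [mem_Ici, not_le, hM, lt_max_iff] at hy
      rcases hy with hyx | hy0
      · rw [exponentialPDF_of_neg (x := -(-y + x)) (by linarith), mul_zero]
      · rw [exponentialPDF_of_neg hy0, zero_mul]
  rw [lconvolution_def, lintegral_congr hprod, lintegral_indicator measurableSet_Ici,
    setLIntegral_congr Ioi_ae_eq_Ici.symm, lintegral_const_mul' _ _ ENNReal.ofReal_ne_top,
    lintegral_Ioi_exp_mul (by linarith), ← ENNReal.ofReal_mul (by positivity), laplacePDF]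
  congr 1
  rcases le_total x 0 with hx | hx
  · rw [hM, max_eq_right hx, abs_of_nonpos hx, mul_zero, exp_zero]
    field_simp
  · rw [hM, max_eq_left hx, abs_of_nonneg hx]
    field_simp
    rw [← exp_add]
    ring_nf

theorem IndepFun.map_sub_eq_laplaceMeasure {Ω : Type*} [MeasurableSpace Ω] {μ : Measure Ω}
    [IsFiniteMeasure μ] {X Y : Ω → ℝ} (hX : Measurable X) (hY : Measurable Y)
    (hXY : IndepFun X Y μ) {r : ℝ} (hr : 0 < r) (hXlaw : μ.map X = expMeasure r)
    (hYlaw : μ.map Y = expMeasure r) : μ.map (X - Y) = laplaceMeasure r := by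
  have hexp : expMeasure r = volume.withDensity (exponentialPDF r) := rfl
  have hnegY : μ.map (-Y) = volume.withDensity (fun y => exponentialPDF r (-y)) := by
    rw [show -Y = Neg.neg ∘ Y from rfl, ← Measure.map_map measurable_neg hY, hYlaw, hexp]
    exact (Measure.measurePreserving_neg volume).map_withDensity (e := MeasurableEquiv.neg ℝ) _
  have hXnegY : IndepFun X (-Y) μ := hXY.comp measurable_id measurable_neg
  rw [sub_eq_add_neg, hXnegY.map_add_eq_map_conv_map hX hY.neg, hXlaw, hnegY, hexp,
    conv_withDensity_eq_lconvolution (by unfold exponentialPDF; fun_prop)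
      (by unfold exponentialPDF; fun_prop), laplaceMeasure]
  congr 1
  funext x
  exact exponentialPDF_lconvolution_exponentialPDF_neg hr x

section

variable {Ω ι : Type*} [MeasurableSpace Ω] {μ : Measure Ω} {X : ι → Ω → ℝ}

theorem iIndepFun.indepFun_finsetSum_finsetSum (hX : iIndepFun X μ)
    (hmeas : ∀ i, Measurable (X i)) {S T : Finset ι} (hST : Disjoint S T) :
    IndepFun (∑ i ∈ S, X i) (∑ i ∈ T, X i) μ := by
  have h := (hX.indepFun_finset S T hST hmeas).comp
    (Finset.measurable_sum Finset.univ fun i _ => measurable_pi_apply i)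
    (Finset.measurable_sum Finset.univ fun i _ => measurable_pi_apply i)
  convert h using 1 <;> ext ω <;> simp only [Finset.sum_apply, Function.comp_apply]
    <;> exact (Finset.sum_coe_sort _ fun i => X i ω).symm

theorem iIndepFun.map_finsetSum_eq_gammaMeasure [IsFiniteMeasure μ] (hX : iIndepFun X μ)
    (hmeas : ∀ i, Measurable (X i)) {a r : ℝ} (ha : 0 < a) (hr : 0 < r)
    (hlaw : ∀ i, μ.map (X i) = gammaMeasure a r) {s : Finset ι} (hs : s.Nonempty) :
    μ.map (∑ i ∈ s, X i) = gammaMeasure (s.card * a) r := by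
  induction hs using Finset.Nonempty.cons_induction with
  | singleton i => simpa using hlaw i
  | cons i s hi hs ih =>
    rw [Finset.sum_cons, IndepFun.map_add_eq_map_conv_map (hmeas i) (by fun_prop)
      (hX.indepFun_finsetSum_of_notMem hmeas hi).symm,
      hlaw i, ih, gammaMeasure_conv_gammaMeasure ha (by positivity) hr, Finset.card_cons]
    congr 1
    push_cast
    ring

end

end ProbabilityTheory

/-- Distributed noisy aggregation: each household `i` perturbs its fixed load `l i` with
Gamma noise `G (Sum.inl i) − G (Sum.inr i)` (shape `1/n`, scale `λ`, i.e. rate `1/λ`,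
all `2n` noise variables mutually independent). The aggregate `∑ i, l̂ᵢ` then has a
Laplace distribution with scale `λ` shifted by `L = ∑ i, l i`, i.e. its law has density
`x ↦ (1/(2λ)) · exp (−|x − L|/λ)` with respect to Lebesgue measure. -/
theorem distributed_noisy_aggregation
    {Ω : Type*} [MeasurableSpace Ω] (μ : Measure Ω) [IsProbabilityMeasure μ]
    (n : ℕ) (hn : 1 ≤ n) (lam : ℝ) (hlam : 0 < lam) (l : Fin n → ℝ)
    (G : (Fin n ⊕ Fin n) → Ω → ℝ) (hmeas : ∀ j, Measurable (G j))
    (hindep : iIndepFun G μ)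
    (hG : ∀ j, Measure.map (G j) μ = gammaMeasure (1 / n) (1 / lam)) :
    Measure.map (fun ω => ∑ i : Fin n, (l i + G (Sum.inl i) ω - G (Sum.inr i) ω)) μ =
      volume.withDensity (fun x => ENNReal.ofReal
        ((1 / (2 * lam)) * Real.exp (-|x - ∑ i, l i| / lam))) := by
  have hexp : ∀ U : Finset (Fin n ⊕ Fin n), U.card = n →
      μ.map (∑ j ∈ U, G j) = expMeasure (1 / lam) := by
    intro U hU
    have hUne : U.Nonempty := Finset.card_pos.1 (by omega)
    rw [hindep.map_finsetSum_eq_gammaMeasure hmeas (by positivity) (by positivity) hG hUne, hU,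
      mul_one_div_cancel (by positivity)]
    rfl
  set S := Finset.univ.map (Function.Embedding.inl : Fin n ↪ Fin n ⊕ Fin n)
  set T := Finset.univ.map (Function.Embedding.inr : Fin n ↪ Fin n ⊕ Fin n)
  have hST : Disjoint S T := by simp [Finset.disjoint_left, S, T]
  have hlap : μ.map (∑ j ∈ S, G j - ∑ j ∈ T, G j) = laplaceMeasure (1 / lam) :=
    (hindep.indepFun_finsetSum_finsetSum hmeas hST).map_sub_eq_laplaceMeasure (by fun_prop)
      (by fun_prop) (by positivity) (hexp S (by simp [S])) (hexp T (by simp [T]))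
  have hagg : (fun ω => ∑ i, (l i + G (Sum.inl i) ω - G (Sum.inr i) ω)) =
      (∑ i, l i + ·) ∘ (∑ j ∈ S, G j - ∑ j ∈ T, G j) := by
    ext ω
    simp only [S, T, Function.comp_apply, Pi.sub_apply, Finset.sum_apply, Finset.sum_map,
      Function.Embedding.inl_apply, Function.Embedding.inr_apply, Finset.sum_sub_distrib,
      Finset.sum_add_distrib, add_sub_assoc]
  rw [hagg, ← Measure.map_map (measurable_const_add _) (by fun_prop), hlap, laplaceMeasure]
  refine ((measurePreserving_add_left volume _).map_withDensity
    (e := MeasurableEquiv.addLeft (∑ i, l i)) _).trans ?_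
  congr 1
  funext x
  simp only [Function.comp_apply, MeasurableEquiv.symm_addLeft, MeasurableEquiv.coe_addLeft,
    laplacePDF, neg_add_eq_sub]
  congr 1
  ring_nf
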